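/- For every positive integer d, the Aguiar coefficient a_{(2d),(d)}^{(d+d,d)} (i.e. for ν = (2d, d), the partition with parts 2d and d) equals 1. -/
import Mathlib


open scoped BigOperators
open scoped Classical

/-- A partition: a finitely supported antitone sequence of natural numbers
(the parts, indexed from 0). -/
def IsPartitionFun (f : ℕ →₀ ℕ) : Prop := ∀ ⦃i j : ℕ⦄, i ≤ j → f j ≤ f i

def Partition' : Type := {f : ℕ →₀ ℕ // IsPartitionFun f}

namespace Partition'

/-- The size `|λ|` of a partition. -/
def size (l : Partition') : ℕ := l.1.sum fun _ v => v

/-- The number of (nonzero) parts of a partition. -/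
def plength (l : Partition') : ℕ := l.1.support.card

noncomputable instance : Add Partition' :=
  ⟨fun l m => ⟨l.1 + m.1, fun i j h => by
    simp only [Finsupp.add_apply]
    exact add_le_add (l.2 h) (m.2 h)⟩⟩

noncomputable instance : SMul ℕ Partition' :=
  ⟨fun d l => ⟨d • l.1, fun i j h => by
    simp only [Finsupp.smul_apply, smul_eq_mul]
    exact Nat.mul_le_mul_left d (l.2 h)⟩⟩

/-- The one-row partition `(m)`. For `m = 0` this is the empty partition. -/
noncomputable def row (m : ℕ) : Partition' :=
  ⟨Finsupp.single 0 m, by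
    intro i j h
    simp only [Finsupp.single_apply]
    split_ifs <;> omega⟩

/-- The two-row partition `(a, b)` (with `b ≤ a`). -/
noncomputable def twoRow (a b : ℕ) (hba : b ≤ a) : Partition' :=
  ⟨Finsupp.single 0 a + Finsupp.single 1 b, by
    intro i j h
    simp only [Finsupp.add_apply, Finsupp.single_apply]
    split_ifs <;> omega⟩

/-- `youngCount n a g` is the number of fixed points of the permutation `g` acting on the
set of functions `Fin n → Fin n` whose fibre over `i` has exactly `a i` elements; i.e. the
value at `g` of the permutation character of `S_n` acting on cosets of the Young subgroup
attached to the composition `a`. It is `0` if some `a i` is negative. -/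
noncomputable def youngCount (n : ℕ) (a : Fin n → ℤ) (g : Equiv.Perm (Fin n)) : ℤ :=
  if ∀ i, 0 ≤ a i then
    (Nat.card {f : Fin n → Fin n //
      f ∘ g = f ∧ ∀ i : Fin n, Nat.card {x : Fin n // f x = i} = (a i).toNat} : ℤ)
  else 0

/-- The irreducible character of the symmetric group `S_n` attached to a partition `l`
of `n`, given by the Jacobi–Trudi determinantal formula
`χ_l = det (h_{l_i - i + j})` expanded over permutations, where `h`-products are the
permutation characters of Young subgroups. (When `size l ≠ n` this is not used.) -/
noncomputable def irrChar (n : ℕ) (l : Partition') (g : Equiv.Perm (Fin n)) : ℤ :=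
  ∑ σ : Equiv.Perm (Fin n), (Equiv.Perm.sign σ : ℤ) *
    youngCount n (fun i => (l.1 i : ℤ) + ((σ i : ℕ) : ℤ) - (i : ℤ)) g

/-- The Kronecker coefficient `g_{λ,μ,ν}`: the multiplicity of the irreducible `S_n`-module
`M_ν` in `M_λ ⊗ M_μ` (for `|λ| = |μ| = |ν| = n`), computed as the scalar product of
characters `(1/n!) ∑_{g ∈ S_n} χ_λ(g) χ_μ(g) χ_ν(g)`; it is `0` if the sizes differ. -/
noncomputable def kron (l m nu : Partition') : ℕ :=
  if size l = size nu ∧ size m = size nu then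
    ((∑ g : Equiv.Perm (Fin (size nu)),
        irrChar (size nu) l g * irrChar (size nu) m g * irrChar (size nu) nu g) /
      (Nat.factorial (size nu) : ℤ)).toNat
  else 0

/-- The standard embedding `S_a × S_b ↪ S_{a+b}`. -/
def sumEmb {a b : ℕ} (g : Equiv.Perm (Fin a)) (h : Equiv.Perm (Fin b)) :
    Equiv.Perm (Fin (a + b)) :=
  (Equiv.permCongr finSumFinEquiv) (Equiv.sumCongr g h)

/-- The Littlewood–Richardson coefficient `c_{λ,μ}^ν`: the multiplicity of `M_ν` in the
induction of `M_λ ⊠ M_μ` from `S_{|λ|} × S_{|μ|}` to `S_{|λ|+|μ|}`, computed by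
Frobenius reciprocity as a scalar product of characters; it is `0` unless
`|ν| = |λ| + |μ|`. -/
noncomputable def lr (l m nu : Partition') : ℕ :=
  if size nu = size l + size m then
    ((∑ g : Equiv.Perm (Fin (size l)), ∑ h : Equiv.Perm (Fin (size m)),
        irrChar (size l) l g * irrChar (size m) m h *
          irrChar (size l + size m) nu (sumEmb g h)) /
      ((Nat.factorial (size l) : ℤ) * (Nat.factorial (size m) : ℤ))).toNat
  else 0

/-- The Aguiar coefficient `a_{λ,μ}^ν`, defined by
`a_{λ,μ}^ν = Σ_{α,β,δ,η,ρ,τ} c_{α,β}^λ c_{η,ρ}^μ g_{β,η,δ} c_{α,δ}^τ c_{τ,ρ}^ν`. -/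
noncomputable def aguiar (l m nu : Partition') : ℕ :=
  ∑ᶠ (α : Partition') (β : Partition') (δ : Partition') (η : Partition')
    (ρ : Partition') (τ : Partition'),
    lr α β l * lr η ρ m * kron β η δ * lr α δ τ * lr τ ρ nu

end Partition'

open Equiv MulAction Partition'

/-! ### Basic partition lemmas -/

def P0 : Partition' := ⟨0, fun _ _ _ => le_rfl⟩

lemma size_P0 : size P0 = 0 := rfl

lemma size_row (n : ℕ) : size (row n) = n := by
  simp [size, row, Finsupp.sum_single_index]

lemma row_apply (n i : ℕ) : (row n).1 i = if i = 0 then n else 0 := by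
  simp [row, Finsupp.single_apply, eq_comm]

lemma twoRow_apply (a b : ℕ) (h : b ≤ a) (i : ℕ) :
    (twoRow a b h).1 i = (if i = 0 then a else 0) + (if i = 1 then b else 0) := by
  simp [twoRow, Finsupp.single_apply, eq_comm]

lemma size_twoRow (a b : ℕ) (h : b ≤ a) : size (twoRow a b h) = a + b := by
  simp only [size, twoRow]
  rw [Finsupp.sum_add_index (by simp) (by simp)]
  simp [Finsupp.sum_single_index]

lemma size_eq_zero {l : Partition'} (h : size l = 0) : l = P0 := by
  apply Subtype.ext
  ext i
  simp only [P0, Finsupp.coe_zero, Pi.zero_apply]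
  by_contra hi
  have h2 := (Finset.sum_eq_zero_iff (s := l.1.support) (f := fun a => l.1 a)).mp h
  exact hi (h2 i (Finsupp.mem_support_iff.mpr hi))

lemma row_zero : row 0 = P0 := by
  apply Subtype.ext
  show Finsupp.single 0 0 = 0
  simp

lemma apply_eq_zero_of_size_le {l : Partition'} {i : ℕ} (h : size l ≤ i) : l.1 i = 0 := by
  by_contra hi
  have hall : ∀ j, j ≤ i → 1 ≤ l.1 j := fun j hj =>
    le_trans (Nat.one_le_iff_ne_zero.mpr hi) (l.2 hj)
  have hsub : Finset.range (i + 1) ⊆ l.1.support := by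
    intro j hj
    exact Finsupp.mem_support_iff.mpr
      (by have := hall j (Nat.lt_succ_iff.mp (Finset.mem_range.mp hj)); omega)
  have : i + 1 ≤ size l := by
    calc i + 1 = ∑ _j ∈ Finset.range (i+1), 1 := by simp
    _ ≤ ∑ j ∈ Finset.range (i+1), l.1 j :=
        Finset.sum_le_sum (fun j hj => hall j (Nat.lt_succ_iff.mp (Finset.mem_range.mp hj)))
    _ ≤ ∑ j ∈ l.1.support, l.1 j :=
        Finset.sum_le_sum_of_subset_of_nonneg hsub (by simp)
    _ = size l := rfl
  omega

lemma sum_parts {l : Partition'} {n : ℕ} (h : size l = n) :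
    ∑ i : Fin n, l.1 i.val = n := by
  have hsub : l.1.support ⊆ Finset.range n := by
    intro j hj
    simp only [Finset.mem_range]
    by_contra hc
    exact (Finsupp.mem_support_iff.mp hj) (apply_eq_zero_of_size_le (by omega))
  rw [Fin.sum_univ_eq_sum_range (fun i => l.1 i)]
  have h2 : size l = ∑ x ∈ Finset.range n, l.1 x := by
    unfold size
    rw [Finsupp.sum]
    exact Finset.sum_subset hsub
      (fun x _ hx => by simpa using Finsupp.notMem_support_iff.mp hx)
  omega

lemma row_eq_of (l : Partition') (h1 : l.1 1 = 0) : l = row (l.1 0) := by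
  apply Subtype.ext
  ext i
  rw [row_apply]
  rcases Nat.eq_zero_or_pos i with h | h
  · simp [h]
  · have : l.1 i = 0 := Nat.le_antisymm (h1 ▸ l.2 h) (Nat.zero_le _)
    simp [this, Nat.pos_iff_ne_zero.mp h]

/-! ### Counting helpers -/

lemma ncard_ico (N lo hi : ℕ) (hhi : hi ≤ N) :
    Nat.card {x : Fin N // lo ≤ x.val ∧ x.val < hi} = hi - lo := by
  apply Nat.card_eq_of_equiv_fin
  refine ⟨fun x => ⟨x.1.val - lo, by have := x.2; omega⟩,
    fun y => ⟨⟨y.val + lo, by have := y.2; omega⟩, ⟨by show lo ≤ y.val + lo; omega,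
      by show y.val + lo < hi; have := y.2; omega⟩⟩, ?_, ?_⟩
  · rintro ⟨x, hx⟩
    have hx' : lo ≤ x.val ∧ x.val < hi := hx
    apply Subtype.ext
    apply Fin.ext
    show x.val - lo + lo = x.val
    omega
  · rintro ⟨y, hy⟩
    apply Fin.ext
    show y + lo - lo = y
    omega

lemma ncard_lt (N t : ℕ) (ht : t ≤ N) : Nat.card {x : Fin N // x.val < t} = t := by
  apply Nat.card_eq_of_equiv_fin
  refine ⟨fun x => ⟨x.1.val, x.2⟩, fun y => ⟨⟨y.val, by omega⟩, y.2⟩, ?_, ?_⟩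
  · rintro ⟨⟨v, hv⟩, hx⟩; rfl
  · rintro ⟨y, hy⟩; rfl

lemma sum_ncard_fiber {α γ : Type*} [Fintype α] [Fintype γ] (u : α → γ) :
    ∑ c : γ, Nat.card {x // u x = c} = Fintype.card α := by
  simp only [Nat.card_eq_fintype_card]
  rw [← Fintype.card_sigma]
  exact Fintype.card_congr (Equiv.sigmaFiberEquiv u)

lemma exists_perm_comp {α γ : Type*} [Fintype α] (u v : α → γ)
    (h : ∀ c, Nat.card {x // u x = c} = Nat.card {x // v x = c}) :
    ∃ g : Equiv.Perm α, ∀ x, u (g x) = v x := by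
  have e : ∀ c, {x // v x = c} ≃ {x // u x = c} := fun c =>
    Classical.choice (Finite.card_eq.mp (h c).symm)
  exact ⟨Equiv.ofFiberEquiv e, fun x => Equiv.ofFiberEquiv_map e x⟩

def sigmaFstFiber {ι : Type*} {β : ι → Type*} (i : ι) : {p : Σ j, β j // p.1 = i} ≃ β i where
  toFun p := p.2 ▸ p.1.2
  invFun b := ⟨⟨i, b⟩, rfl⟩
  left_inv := by rintro ⟨⟨j, b⟩, rfl⟩; rfl
  right_inv b := rfl

/-! ### Burnside machinery -/

abbrev Fibs (n : ℕ) (m : Fin n → ℕ) : Type :=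
  {f : Fin n → Fin n // ∀ i, Nat.card {x // f x = i} = m i}

lemma fiber_comp_perm {n : ℕ} (f : Fin n → Fin n) (g : Perm (Fin n)) (i : Fin n) :
    Nat.card {x // (f ∘ g) x = i} = Nat.card {x // f x = i} :=
  Nat.card_congr (g.subtypeEquiv fun _ => Iff.rfl)

lemma burnside_core {G : Type} [Group G] [Fintype G] (n : ℕ) (φ : G →* Perm (Fin n))
    (m : Fin n → ℕ) (k : ℕ)
    (inv : Fibs n m → Fin k)
    (hinv : ∀ (g : G) (f : Fibs n m),
      inv ⟨f.1 ∘ (φ g), fun i => (fiber_comp_perm f.1 (φ g) i).trans (f.2 i)⟩ = inv f)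
    (hsurj : ∀ q : Fin k, ∃ f : Fibs n m, inv f = q)
    (hinj : ∀ f f' : Fibs n m, inv f = inv f' → ∃ g : G, f'.1 = f.1 ∘ (φ g)) :
    ∑ g : G, (Nat.card {f : Fin n → Fin n // f ∘ (φ g) = f
        ∧ ∀ i, Nat.card {x // f x = i} = m i}) = k * Nat.card G := by
  letI act : MulAction G (Fibs n m) :=
    { smul := fun g f => ⟨f.1 ∘ (φ g⁻¹), fun i => (fiber_comp_perm f.1 (φ g⁻¹) i).trans (f.2 i)⟩
      one_smul := fun f => Subtype.ext (by
        show f.1 ∘ (φ 1⁻¹) = f.1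
        simp)
      mul_smul := fun a b f => Subtype.ext (by
        show f.1 ∘ (φ (a*b)⁻¹) = (f.1 ∘ (φ b⁻¹)) ∘ (φ a⁻¹)
        funext x
        simp [Function.comp, mul_inv_rev, map_mul, Perm.mul_apply]) }
  have hsmul : ∀ (g : G) (f : Fibs n m), (g • f).1 = f.1 ∘ (φ g⁻¹) := fun g f => rfl
  have step1 : ∀ g : G, (Nat.card {f : Fin n → Fin n // f ∘ (φ g) = f
        ∧ ∀ i, Nat.card {x // f x = i} = m i}) = Fintype.card (fixedBy (Fibs n m) g⁻¹) := by
    intro g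
    rw [← Nat.card_eq_fintype_card]
    apply Nat.card_congr
    refine ⟨fun f => ⟨⟨f.1, f.2.2⟩, ?_⟩, fun F => ⟨F.1.1, ?_, F.1.2⟩, fun f => rfl, fun F => rfl⟩
    · show g⁻¹ • (⟨f.1, f.2.2⟩ : Fibs n m) = ⟨f.1, f.2.2⟩
      apply Subtype.ext
      rw [hsmul, inv_inv]
      exact f.2.1
    · have hF := F.2
      rw [mem_fixedBy] at hF
      have h2 := congrArg Subtype.val hF
      rw [hsmul, inv_inv] at h2
      exact h2
  rw [Finset.sum_congr rfl (fun g _ => step1 g)]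
  have step2 : ∑ g : G, Fintype.card (fixedBy (Fibs n m) g⁻¹)
      = ∑ g : G, Fintype.card (fixedBy (Fibs n m) g) :=
    Fintype.sum_equiv (Equiv.inv G) _ _ (fun g => rfl)
  rw [step2, MulAction.sum_card_fixedBy_eq_card_orbits_mul_card_group]
  have step3 : Fintype.card (Quotient (orbitRel G (Fibs n m))) = k := by
    have hbij : Function.Bijective (Quotient.lift inv (by
        intro f f' (hr : f ∈ orbit G f')
        obtain ⟨g, hg⟩ := hr
        have he : g • f' = (⟨f'.1 ∘ (φ g⁻¹), fun i =>
            (fiber_comp_perm f'.1 (φ g⁻¹) i).trans (f'.2 i)⟩ : Fibs n m) :=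
          Subtype.ext (hsmul g f')
        rw [← hg]
        show inv (g • f') = inv f'
        rw [he, hinv g⁻¹ f']) : Quotient (orbitRel G (Fibs n m)) → Fin k) := by
      constructor
      · refine Quotient.ind₂ ?_
        intro f f' h
        obtain ⟨g, hg⟩ := hinj f f' h
        have he : g⁻¹ • f = f' := by
          apply Subtype.ext
          rw [hsmul, inv_inv, hg]
        apply Quotient.sound
        show f ∈ orbit G f'
        exact ⟨g, by show g • f' = f; rw [← he, smul_inv_smul]⟩
      · intro q
        obtain ⟨f, hf⟩ := hsurj q
        exact ⟨Quotient.mk _ f, hf⟩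
    rw [Fintype.card_of_bijective hbij, Fintype.card_fin]
  rw [step3, Nat.card_eq_fintype_card]

/-! ### sumEmb lemmas -/

lemma sumEmb_zero {A : ℕ} (g : Perm (Fin A)) (h : Perm (Fin 0)) : sumEmb g h = g := by
  apply Equiv.ext
  intro x
  show (permCongr finSumFinEquiv) (sumCongr g h) x = g x
  rw [Equiv.permCongr_apply]
  have hx : finSumFinEquiv.symm x = Sum.inl (⟨x.val, by have := x.isLt; omega⟩ : Fin A) := by
    have hxx : x = Fin.castAdd 0 (⟨x.val, by have := x.isLt; omega⟩ : Fin A) := Fin.ext rfl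
    rw [hxx, finSumFinEquiv_symm_apply_castAdd]
    rfl
  rw [hx]
  rfl

lemma sumEmb_castAdd {A C : ℕ} (g : Perm (Fin A)) (h : Perm (Fin C)) (x : Fin A) :
    sumEmb g h (Fin.castAdd C x) = Fin.castAdd C (g x) := by
  show (permCongr finSumFinEquiv) (sumCongr g h) _ = _
  rw [Equiv.permCongr_apply, finSumFinEquiv_symm_apply_castAdd]
  rfl

lemma sumEmb_natAdd {A C : ℕ} (g : Perm (Fin A)) (h : Perm (Fin C)) (x : Fin C) :
    sumEmb g h (Fin.natAdd A x) = Fin.natAdd A (h x) := by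
  show (permCongr finSumFinEquiv) (sumCongr g h) _ = _
  rw [Equiv.permCongr_apply, finSumFinEquiv_symm_apply_natAdd]
  rfl

noncomputable def sumEmbHom (A C : ℕ) : Perm (Fin A) × Perm (Fin C) →* Perm (Fin (A+C)) where
  toFun p := sumEmb p.1 p.2
  map_one' := by
    apply Equiv.ext
    intro x
    show (permCongr finSumFinEquiv) (sumCongr 1 1) x = x
    rw [Equiv.permCongr_apply]
    rcases hz : finSumFinEquiv.symm x with z | z
    · have hxz : x = finSumFinEquiv (Sum.inl z) := by rw [← hz, Equiv.apply_symm_apply]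
      rw [hxz]
      rfl
    · have hxz : x = finSumFinEquiv (Sum.inr z) := by rw [← hz, Equiv.apply_symm_apply]
      rw [hxz]
      rfl
  map_mul' p q := by
    apply Equiv.ext
    intro x
    show (permCongr finSumFinEquiv) (sumCongr (p.1 * q.1) (p.2 * q.2)) x
      = ((permCongr finSumFinEquiv) (sumCongr p.1 p.2)) (((permCongr finSumFinEquiv) (sumCongr q.1 q.2)) x)
    simp only [Equiv.permCongr_apply, Equiv.symm_apply_apply]
    rcases hz : finSumFinEquiv.symm x with z | z
    · rfl
    · rfl

/-! ### The one-block count -/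

lemma fibs_nonempty {n : ℕ} (m : Fin n → ℕ) (hm : ∑ i, m i = n) : Nonempty (Fibs n m) := by
  have hcard : Fintype.card (Σ i : Fin n, Fin (m i)) = n := by
    simp [Fintype.card_sigma, hm]
  let e0 : (Σ i : Fin n, Fin (m i)) ≃ Fin n := (Fintype.equivFin _).trans (finCongr hcard)
  refine ⟨⟨fun x => (e0.symm x).1, fun i => ?_⟩⟩
  have e1 : {x : Fin n // (e0.symm x).1 = i} ≃ {p : Σ j, Fin (m j) // p.1 = i} :=
    e0.symm.subtypeEquiv (fun x => Iff.rfl)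
  rw [Nat.card_congr (e1.trans (sigmaFstFiber i))]
  simp [Nat.card_eq_fintype_card]

lemma burn1 {n : ℕ} (m : Fin n → ℕ) (hm : ∑ i, m i = n) :
    ∑ g : Perm (Fin n), (Nat.card {f : Fin n → Fin n // f ∘ g = f
        ∧ ∀ i, Nat.card {x // f x = i} = m i}) = n.factorial := by
  have hne := fibs_nonempty m hm
  have hmain := burnside_core n (MonoidHom.id (Perm (Fin n))) m 1 (fun _ => 0)
    (fun g f => Subsingleton.elim _ _)
    (fun q => ⟨hne.some, Subsingleton.elim _ _⟩)
    (fun f f' _ => by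
      obtain ⟨g, hg⟩ := exists_perm_comp f.1 f'.1 (fun c => by rw [f.2 c, f'.2 c])
      exact ⟨g, funext (fun x => (hg x).symm)⟩)
  simpa [Nat.card_eq_fintype_card, Fintype.card_perm, Fintype.card_fin] using hmain

/-! ### The two-block count -/

lemma burn2Y (A C s : ℕ) (hA : 1 ≤ A) (hC : 1 ≤ C) (hsA : s ≤ A) (hsC : s ≤ C)
    (a : Fin (A+C) → ℤ)
    (ha : ∀ i : Fin (A+C), a i = if i.val = 0 then ((A+C-s : ℕ) : ℤ)
        else if i.val = 1 then (s : ℤ) else 0) :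
    ∑ g : Perm (Fin A), ∑ h : Perm (Fin C),
        youngCount (A+C) a (sumEmb g h) = (((s+1) * (A.factorial * C.factorial) : ℕ) : ℤ) := by
  classical
  set m : Fin (A+C) → ℕ := fun i => if i.val = 0 then A+C-s else if i.val = 1 then s else 0
    with hmdef
  have hpos : ∀ i, 0 ≤ a i := by
    intro i; rw [ha i]; split_ifs <;> positivity
  have htoNat : ∀ i, (a i).toNat = m i := by
    intro i; rw [ha i]; simp only [hmdef]; split_ifs <;> simp
  have hYC : ∀ g' : Perm (Fin (A+C)), youngCount (A+C) a g'
      = ((Nat.card {f : Fin (A+C) → Fin (A+C) // f ∘ g' = f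
          ∧ ∀ i, Nat.card {x // f x = i} = m i} : ℕ) : ℤ) := by
    intro g'
    rw [youngCount, if_pos hpos]
    congr 1
    apply Nat.card_congr
    apply Equiv.subtypeEquivRight
    intro f
    constructor
    · rintro ⟨h1, h2⟩; exact ⟨h1, fun i => (h2 i).trans (htoNat i)⟩
    · rintro ⟨h1, h2⟩; exact ⟨h1, fun i => (h2 i).trans (htoNat i).symm⟩
  have hn2 : 2 ≤ A + C := by omega
  set i0 : Fin (A+C) := ⟨0, by omega⟩ with hi0
  set i1 : Fin (A+C) := ⟨1, by omega⟩ with hi1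
  have hne01 : i0 ≠ i1 := by
    intro hE
    rw [Fin.ext_iff] at hE
    simp [hi0, hi1] at hE
  have hm0 : m i0 = A + C - s := by simp [hmdef, hi0]
  have hm1 : m i1 = s := by simp [hmdef, hi1]
  have hmo : ∀ c : Fin (A+C), c ≠ i0 → c ≠ i1 → m c = 0 := by
    intro c h0 h1
    simp only [hmdef]
    rw [if_neg, if_neg]
    · intro hE; exact h1 (Fin.ext hE)
    · intro hE; exact h0 (Fin.ext hE)
  -- values of a member are i0 or i1
  have hval : ∀ f : Fibs (A+C) m, ∀ y, f.1 y = i0 ∨ f.1 y = i1 := by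
    intro f y
    by_contra hc
    push_neg at hc
    have h1 : Nat.card {x // f.1 x = f.1 y} = 0 := by
      rw [f.2, hmo _ hc.1 hc.2]
    have h2 : 0 < Nat.card {x // f.1 x = f.1 y} := Finite.card_pos (h := ⟨⟨y, rfl⟩⟩)
    omega
  -- block decomposition of fibres
  have hblock : ∀ (f : Fin (A+C) → Fin (A+C)) (c : Fin (A+C)),
      Nat.card {y // f y = c} = Nat.card {x : Fin A // f (Fin.castAdd C x) = c}
        + Nat.card {x : Fin C // f (Fin.natAdd A x) = c} := by
    intro f c
    have e1 : {y : Fin (A+C) // f y = c} ≃ {z : Fin A ⊕ Fin C // f (finSumFinEquiv z) = c} :=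
      (finSumFinEquiv.subtypeEquiv (fun z => Iff.rfl)).symm
    calc Nat.card {y // f y = c}
        = Nat.card ({x : Fin A // f (Fin.castAdd C x) = c} ⊕ {x : Fin C // f (Fin.natAdd A x) = c}) :=
          Nat.card_congr (e1.trans Equiv.subtypeSum)
      _ = _ := by
          rw [Nat.card_eq_fintype_card, Fintype.card_sum,
            ← Nat.card_eq_fintype_card, ← Nat.card_eq_fintype_card]
  -- main structural facts about a member
  have key : ∀ f : Fibs (A+C) m,
      Nat.card {x : Fin C // f.1 (Fin.natAdd A x) = i1} ≤ s
      ∧ (∀ c, Nat.card {x : Fin A // f.1 (Fin.castAdd C x) = c} =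
          if c = i0 then A - (s - Nat.card {x : Fin C // f.1 (Fin.natAdd A x) = i1})
          else if c = i1 then s - Nat.card {x : Fin C // f.1 (Fin.natAdd A x) = i1} else 0)
      ∧ (∀ c, Nat.card {x : Fin C // f.1 (Fin.natAdd A x) = c} =
          if c = i0 then C - Nat.card {x : Fin C // f.1 (Fin.natAdd A x) = i1}
          else if c = i1 then Nat.card {x : Fin C // f.1 (Fin.natAdd A x) = i1} else 0) := by
    intro f
    set q := Nat.card {x : Fin C // f.1 (Fin.natAdd A x) = i1} with hq
    have hs1 : Nat.card {y // f.1 y = i1} = s := by rw [f.2 i1, hm1]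
    have hsplit := hblock f.1 i1
    rw [hs1] at hsplit
    have hqs : q ≤ s := by omega
    have hlc1 : Nat.card {x : Fin A // f.1 (Fin.castAdd C x) = i1} = s - q := by omega
    have hLempty : ∀ c, c ≠ i0 → c ≠ i1 → Nat.card {x : Fin A // f.1 (Fin.castAdd C x) = c} = 0 := by
      intro c h0 h1
      have : IsEmpty {x : Fin A // f.1 (Fin.castAdd C x) = c} := by
        refine ⟨fun x => ?_⟩
        rcases hval f (Fin.castAdd C x.1) with h | h
        · exact h0 (x.2 ▸ h ▸ rfl)
        · exact h1 (x.2 ▸ h ▸ rfl)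
      exact Nat.card_of_isEmpty
    have hRempty : ∀ c, c ≠ i0 → c ≠ i1 → Nat.card {x : Fin C // f.1 (Fin.natAdd A x) = c} = 0 := by
      intro c h0 h1
      have : IsEmpty {x : Fin C // f.1 (Fin.natAdd A x) = c} := by
        refine ⟨fun x => ?_⟩
        rcases hval f (Fin.natAdd A x.1) with h | h
        · exact h0 (x.2 ▸ h ▸ rfl)
        · exact h1 (x.2 ▸ h ▸ rfl)
      exact Nat.card_of_isEmpty
    have hLc0 : Nat.card {x : Fin A // f.1 (Fin.castAdd C x) = i0} = A - (s - q) := by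
      have ecompl : {x : Fin A // f.1 (Fin.castAdd C x) = i0}
          ≃ {x : Fin A // ¬ (f.1 (Fin.castAdd C x) = i1)} := by
        apply Equiv.subtypeEquivRight
        intro x
        constructor
        · intro h0 h1
          exact hne01 (h0 ▸ h1)
        · intro h1
          rcases hval f (Fin.castAdd C x) with h | h
          · exact h
          · exact absurd h h1
      rw [Nat.card_congr ecompl, Nat.card_eq_fintype_card, Fintype.card_subtype_compl]
      simp only [← Nat.card_eq_fintype_card]
      rw [hlc1]
      simp [Nat.card_eq_fintype_card]
    have hRc0 : Nat.card {x : Fin C // f.1 (Fin.natAdd A x) = i0} = C - q := by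
      have ecompl : {x : Fin C // f.1 (Fin.natAdd A x) = i0}
          ≃ {x : Fin C // ¬ (f.1 (Fin.natAdd A x) = i1)} := by
        apply Equiv.subtypeEquivRight
        intro x
        constructor
        · intro h0 h1
          exact hne01 (h0 ▸ h1)
        · intro h1
          rcases hval f (Fin.natAdd A x) with h | h
          · exact h
          · exact absurd h h1
      rw [Nat.card_congr ecompl, Nat.card_eq_fintype_card, Fintype.card_subtype_compl]
      simp only [← Nat.card_eq_fintype_card]
      rw [← hq]
      simp [Nat.card_eq_fintype_card]
    refine ⟨hqs, fun c => ?_, fun c => ?_⟩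
    · by_cases h0 : c = i0
      · rw [if_pos h0, h0, hLc0]
      · rw [if_neg h0]
        by_cases h1 : c = i1
        · rw [if_pos h1, h1, hlc1]
        · rw [if_neg h1, hLempty c h0 h1]
    · by_cases h0 : c = i0
      · rw [if_pos h0, h0, hRc0]
      · rw [if_neg h0]
        by_cases h1 : c = i1
        · rw [if_pos h1, h1, ← hq]
        · rw [if_neg h1, hRempty c h0 h1]
  -- the invariant
  have hinvdef : ∀ f : Fibs (A+C) m,
      Nat.card {x : Fin C // f.1 (Fin.natAdd A x) = i1} < s + 1 :=
    fun f => Nat.lt_succ_of_le (key f).1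
  set inv : Fibs (A+C) m → Fin (s+1) :=
    fun f => ⟨Nat.card {x : Fin C // f.1 (Fin.natAdd A x) = i1}, hinvdef f⟩ with hinvd
  have hmain := burnside_core (A+C) (sumEmbHom A C) m (s+1) inv
    (by
      intro g f
      apply Fin.ext
      show Nat.card {x : Fin C // (f.1 ∘ (sumEmbHom A C g)) (Fin.natAdd A x) = i1}
        = Nat.card {x : Fin C // f.1 (Fin.natAdd A x) = i1}
      apply Nat.card_congr
      apply Equiv.subtypeEquiv g.2
      intro x
      show f.1 (sumEmb g.1 g.2 (Fin.natAdd A x)) = i1 ↔ _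
      rw [sumEmb_natAdd])
    (by
      -- surjectivity
      intro q
      have hq : q.val ≤ s := Nat.lt_succ_iff.mp q.isLt
      set lo := A - (s - q.val) with hlo
      set hi := A + q.val with hhi
      set f : Fin (A+C) → Fin (A+C) :=
        fun y => if lo ≤ y.val ∧ y.val < hi then i1 else i0 with hf
      have hfi1 : ∀ y, f y = i1 ↔ (lo ≤ y.val ∧ y.val < hi) := by
        intro y
        simp only [hf]
        split_ifs with hcond
        · simp [hcond]
        · simp [hcond, hne01]
      have hfi0 : ∀ y, f y = i0 ↔ ¬ (lo ≤ y.val ∧ y.val < hi) := by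
        intro y
        simp only [hf]
        split_ifs with hcond
        · simp [hcond, hne01.symm]
        · simp [hcond]
      have hcard1 : Nat.card {y // f y = i1} = s := by
        rw [Nat.card_congr (Equiv.subtypeEquivRight hfi1), ncard_ico (A+C) lo hi (by omega)]
        omega
      refine ⟨⟨f, ?_⟩, ?_⟩
      · intro i
        by_cases h1 : i = i1
        · rw [h1, hcard1, hm1]
        · by_cases h0 : i = i0
          · rw [h0, hm0]
            have ecompl : {y // f y = i0} ≃ {y // ¬ (f y = i1)} := by
              apply Equiv.subtypeEquivRight
              intro y
              rw [hfi0, hfi1]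
            rw [Nat.card_congr ecompl, Nat.card_eq_fintype_card, Fintype.card_subtype_compl]
            simp only [← Nat.card_eq_fintype_card]
            rw [hcard1]
            simp [Nat.card_eq_fintype_card]
          · rw [hmo i h0 h1]
            have : IsEmpty {y // f y = i} := by
              refine ⟨fun y => ?_⟩
              have := y.2
              simp only [hf] at this
              split_ifs at this
              · exact h1 (this ▸ rfl)
              · exact h0 (this ▸ rfl)
            exact Nat.card_of_isEmpty
      · -- inv value is q
        apply Fin.ext
        show Nat.card {x : Fin C // f (Fin.natAdd A x) = i1} = q.val
        have heq : ∀ x : Fin C, (f (Fin.natAdd A x) = i1) ↔ (x.val < q.val) := by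
          intro x
          rw [hfi1]
          show lo ≤ A + x.val ∧ A + x.val < hi ↔ _
          omega
        rw [Nat.card_congr (Equiv.subtypeEquivRight heq), ncard_lt C q.val (by omega)])
    (by
      -- injectivity on orbits
      intro f f' hq
      have hqq := congrArg Fin.val hq
      simp only [hinvd] at hqq
      obtain ⟨hb1, hL, hR⟩ := key f
      obtain ⟨hb1', hL', hR'⟩ := key f'
      obtain ⟨g, hg⟩ := exists_perm_comp (fun x : Fin A => f.1 (Fin.castAdd C x))
        (fun x : Fin A => f'.1 (Fin.castAdd C x))
        (fun c => by rw [hL c, hL' c, hqq])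
      obtain ⟨h, hh⟩ := exists_perm_comp (fun x : Fin C => f.1 (Fin.natAdd A x))
        (fun x : Fin C => f'.1 (Fin.natAdd A x))
        (fun c => by rw [hR c, hR' c, hqq])
      refine ⟨(g, h), ?_⟩
      funext y
      show f'.1 y = f.1 (sumEmb g h y)
      rcases hz : finSumFinEquiv.symm y with z | z
      · have hyz : y = finSumFinEquiv (Sum.inl z) := by rw [← hz, Equiv.apply_symm_apply]
        have hyz' : y = Fin.castAdd C z := hyz
        rw [hyz', sumEmb_castAdd]
        exact (hg z).symm
      · have hyz : y = finSumFinEquiv (Sum.inr z) := by rw [← hz, Equiv.apply_symm_apply]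
        have hyz' : y = Fin.natAdd A z := hyz
        rw [hyz', sumEmb_natAdd]
        exact (hh z).symm)
  -- assemble
  have hG : Nat.card (Perm (Fin A) × Perm (Fin C)) = A.factorial * C.factorial := by
    rw [Nat.card_eq_fintype_card, Fintype.card_prod, Fintype.card_perm, Fintype.card_perm,
      Fintype.card_fin, Fintype.card_fin]
  calc ∑ g : Perm (Fin A), ∑ h : Perm (Fin C), youngCount (A+C) a (sumEmb g h)
      = ∑ g : Perm (Fin A), ∑ h : Perm (Fin C),
          ((Nat.card {f : Fin (A+C) → Fin (A+C) // f ∘ (sumEmbHom A C (g, h)) = f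
            ∧ ∀ i, Nat.card {x // f x = i} = m i} : ℕ) : ℤ) := by
        apply Finset.sum_congr rfl
        intro g _
        apply Finset.sum_congr rfl
        intro h _
        exact hYC (sumEmb g h)
    _ = ((∑ p : Perm (Fin A) × Perm (Fin C),
          Nat.card {f : Fin (A+C) → Fin (A+C) // f ∘ (sumEmbHom A C p) = f
            ∧ ∀ i, Nat.card {x // f x = i} = m i} : ℕ) : ℤ) := by
        rw [Fintype.sum_prod_type]
        push_cast
        rfl
    _ = (((s+1) * (A.factorial * C.factorial) : ℕ) : ℤ) := by
        rw [hmain, hG]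

/-! ### Permutations bounded below on a tail are the identity there -/

lemma perm_tail_fix {n : ℕ} (σ : Perm (Fin n)) (t : ℕ)
    (h : ∀ i : Fin n, t ≤ i.val → i.val ≤ (σ i).val) :
    ∀ i : Fin n, t ≤ i.val → σ i = i := by
  classical
  set T : Finset (Fin n) := Finset.univ.filter (fun i => t ≤ i.val) with hT
  have hmem : ∀ i : Fin n, i ∈ T ↔ t ≤ i.val := by
    intro i; simp [hT]
  have hmapsto : ∀ i ∈ T, σ i ∈ T := by
    intro i hi
    rw [hmem] at hi ⊢
    exact le_trans hi (h i hi)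
  have himg : T.image σ = T := by
    apply Finset.eq_of_subset_of_card_le
    · intro j hj
      obtain ⟨i, hi, rfl⟩ := Finset.mem_image.mp hj
      exact hmapsto i hi
    · rw [Finset.card_image_of_injective _ σ.injective]
  have hsum : ∑ i ∈ T, i.val = ∑ i ∈ T, (σ i).val := by
    conv_lhs => rw [← himg]
    rw [Finset.sum_image (fun a _ b _ hab => σ.injective hab)]
  have hpoint := (Finset.sum_eq_sum_iff_of_le (fun i hi => h i ((hmem i).mp hi))).mp hsum
  intro i hi
  exact Fin.ext ((hpoint i ((hmem i).mpr hi)).symm)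

lemma perm_forced_id {n : ℕ} (σ : Perm (Fin n))
    (h : ∀ i : Fin n, 1 ≤ i.val → i.val ≤ (σ i).val) : σ = 1 := by
  have hfix := perm_tail_fix σ 1 h
  apply Equiv.ext
  intro i
  rw [Perm.one_apply]
  rcases Nat.eq_zero_or_pos i.val with h0 | h0
  · by_contra hne
    rcases Nat.eq_zero_or_pos (σ i).val with h1 | h1
    · exact hne (Fin.ext (by omega))
    · have h2 := hfix (σ i) h1
      have h3 := σ.injective h2
      exact hne h3
  · exact hfix i h0

lemma perm_forced_swap {n : ℕ} (σ : Perm (Fin n)) (hn : 2 ≤ n)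
    (h : ∀ i : Fin n, 2 ≤ i.val → i.val ≤ (σ i).val) :
    σ = 1 ∨ σ = Equiv.swap (⟨0, by omega⟩ : Fin n) ⟨1, by omega⟩ := by
  have hfix := perm_tail_fix σ 2 h
  set i0 : Fin n := ⟨0, by omega⟩ with hi0
  set i1 : Fin n := ⟨1, by omega⟩ with hi1
  have hne01 : i0 ≠ i1 := by
    intro hE; rw [Fin.ext_iff] at hE; simp [hi0, hi1] at hE
  have hsmall : ∀ j : Fin n, j.val < 2 → (σ j).val < 2 := by
    intro j hj
    by_contra hc
    push_neg at hc
    have h2 := hfix (σ j) hc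
    have h3 := σ.injective h2
    rw [h3] at hc
    omega
  have hv0 : (i0 : Fin n).val = 0 := rfl
  have hv1 : (i1 : Fin n).val = 1 := rfl
  have hs0 := hsmall i0 (by omega)
  have hs1 := hsmall i1 (by omega)
  have hneq : σ i0 ≠ σ i1 := fun hE => hne01 (σ.injective hE)
  rcases Nat.eq_zero_or_pos (σ i0).val with hσ0 | hσ0
  · -- σ i0 = i0, σ i1 = i1, σ = 1
    left
    have e0 : σ i0 = i0 := Fin.ext (by omega)
    have e1 : σ i1 = i1 := by
      apply Fin.ext
      have : (σ i1).val ≠ 0 := by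
        intro hE
        exact hneq (Fin.ext (by omega))
      omega
    apply Equiv.ext
    intro i
    rw [Perm.one_apply]
    rcases Nat.lt_or_ge i.val 2 with hi | hi
    · rcases Nat.lt_or_ge i.val 1 with hi' | hi'
      · have : i = i0 := Fin.ext (by omega)
        rw [this, e0]
      · have : i = i1 := Fin.ext (by omega)
        rw [this, e1]
    · exact hfix i hi
  · -- σ i0 = i1, σ i1 = i0, σ = swap
    right
    have e0 : σ i0 = i1 := Fin.ext (by omega)
    have e1 : σ i1 = i0 := by
      apply Fin.ext
      have : (σ i1).val ≠ 1 := by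
        intro hE
        exact hneq (Fin.ext (by omega))
      omega
    apply Equiv.ext
    intro i
    rcases Nat.lt_or_ge i.val 2 with hi | hi
    · rcases Nat.lt_or_ge i.val 1 with hi' | hi'
      · have hii : i = i0 := Fin.ext (by omega)
        rw [hii, e0, Equiv.swap_apply_left]
      · have hii : i = i1 := Fin.ext (by omega)
        rw [hii, e1, Equiv.swap_apply_right]
    · rw [hfix i hi, Equiv.swap_apply_of_ne_of_ne]
      · intro hE; rw [hE] at hi; omega
      · intro hE; rw [hE] at hi; omega

/-! ### Character values -/

lemma irrChar_of_dim_zero {N : ℕ} (hN : N = 0) (l : Partition') (g : Perm (Fin N)) :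
    irrChar N l g = 1 := by
  subst hN
  haveI hu : Unique (Perm (Fin 0)) := ⟨⟨1⟩, fun σ => Equiv.ext fun x => x.elim0⟩
  have huniv : (Finset.univ : Finset (Perm (Fin 0))) = {1} :=
    Finset.eq_singleton_iff_unique_mem.mpr ⟨Finset.mem_univ 1, fun σ _ => Subsingleton.elim σ 1⟩
  rw [irrChar, huniv, Finset.sum_singleton, Equiv.Perm.sign_one]
  rw [youngCount, if_pos (fun i => i.elim0)]
  haveI : Unique {f : Fin 0 → Fin 0 // f ∘ g = f
      ∧ ∀ i : Fin 0, Nat.card {x // f x = i}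
        = ((l.1 i : ℤ) + (((1 : Perm (Fin 0)) i : ℕ) : ℤ) - (i : ℤ)).toNat} :=
    ⟨⟨⟨fun x => x.elim0, funext fun x => x.elim0, fun i => i.elim0⟩⟩,
      fun f => Subtype.ext (funext fun x => x.elim0)⟩
  rw [Nat.card_unique]
  simp

lemma irrChar_row {N : ℕ} (n : ℕ) (hn : n = N) (g : Perm (Fin N)) :
    irrChar N (row n) g = 1 := by
  subst hn
  rw [irrChar]
  rw [Finset.sum_eq_single 1]
  · rw [Equiv.Perm.sign_one]
    have hpos : ∀ i : Fin n,
        0 ≤ ((row n).1 i : ℤ) + (((1 : Perm (Fin n)) i : ℕ) : ℤ) - (i : ℤ) := by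
      intro i
      rw [Perm.one_apply]
      omega
    rw [youngCount, if_pos hpos]
    have hcard : Nat.card {f : Fin n → Fin n // f ∘ g = f
        ∧ ∀ i : Fin n, Nat.card {x // f x = i}
          = (((row n).1 i : ℤ) + (((1 : Perm (Fin n)) i : ℕ) : ℤ) - (i : ℤ)).toNat} = 1 := by
      rw [Nat.card_eq_one_iff_unique]
      constructor
      · -- subsingleton
        constructor
        rintro ⟨f, hf1, hf2⟩ ⟨f', hf1', hf2'⟩
        have hzero : ∀ (u : Fin n → Fin n), (∀ i : Fin n, Nat.card {x // u x = i}
            = (((row n).1 i : ℤ) + (((1 : Perm (Fin n)) i : ℕ) : ℤ) - (i : ℤ)).toNat) →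
            ∀ x, (u x).val = 0 := by
          intro u hu x
          by_contra hne
          have h1 : Nat.card {y // u y = u x} = 0 := by
            rw [hu (u x), Perm.one_apply]
            have : (row n).1 (u x).val = 0 := by
              rw [row_apply]
              simp [hne]
            rw [this]
            simp
          have h2 : 0 < Nat.card {y // u y = u x} := Finite.card_pos (h := ⟨⟨x, rfl⟩⟩)
          omega
        apply Subtype.ext
        funext x
        exact Fin.ext (by rw [hzero f hf2 x, hzero f' hf2' x])
      · -- nonempty
        refine ⟨⟨fun x => ⟨0, lt_of_le_of_lt (Nat.zero_le _) x.isLt⟩, ?_, ?_⟩⟩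
        · funext x
          rfl
        · intro i
          rw [Perm.one_apply]
          have harith : (((row n).1 i : ℤ) + (i : ℤ) - (i : ℤ)) = ((row n).1 i : ℤ) := by ring
          rw [harith, Int.toNat_natCast, row_apply]
          by_cases hi : (i : ℕ) = 0
          · rw [if_pos hi]
            have : ∀ x : Fin n, (⟨0, lt_of_le_of_lt (Nat.zero_le _) x.isLt⟩ : Fin n) = i :=
              fun x => Fin.ext (show (0 : ℕ) = i.val by omega)
            rw [Nat.card_congr (Equiv.subtypeUnivEquiv this)]
            simp [Nat.card_eq_fintype_card]
          · rw [if_neg hi]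
            have : IsEmpty {x : Fin n // (⟨0, lt_of_le_of_lt (Nat.zero_le _) x.isLt⟩ : Fin n) = i} := by
              refine ⟨fun x => ?_⟩
              have := congrArg Fin.val x.2
              simp at this
              omega
            exact Nat.card_of_isEmpty
    rw [hcard]
    simp
  · intro σ _ hσ
    have hbad : ∃ i : Fin n, 1 ≤ i.val ∧ (σ i).val < i.val := by
      by_contra hc
      push_neg at hc
      exact hσ (perm_forced_id σ (fun i hi => hc i hi))
    obtain ⟨i, hi1, hi2⟩ := hbad
    rw [youngCount, if_neg, mul_zero]
    push_neg
    refine ⟨i, ?_⟩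
    have : (row n).1 i.val = 0 := by
      rw [row_apply]
      simp [Nat.pos_iff_ne_zero.mp hi1]
    rw [this]
    push_cast
    omega
  · intro h
    simp at h

lemma irrChar_twoRow {N : ℕ} (P Q : ℕ) (hQP : Q ≤ P) (hQ : 1 ≤ Q) (hN : N = P + Q)
    (g : Perm (Fin N)) :
    irrChar N (twoRow P Q hQP) g
      = youngCount N (fun i => if i.val = 0 then (P : ℤ) else if i.val = 1 then (Q : ℤ) else 0) g
        - youngCount N (fun i => if i.val = 0 then (P : ℤ) + 1
            else if i.val = 1 then (Q : ℤ) - 1 else 0) g := by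
  have hn2 : 2 ≤ N := by omega
  set i0 : Fin N := ⟨0, by omega⟩ with hi0
  set i1 : Fin N := ⟨1, by omega⟩ with hi1
  have hne01 : i0 ≠ i1 := by
    intro hE; rw [Fin.ext_iff] at hE; simp [hi0, hi1] at hE
  have hsne : (1 : Perm (Fin N)) ≠ Equiv.swap i0 i1 := by
    intro hE
    have : (1 : Perm (Fin N)) i0 = Equiv.swap i0 i1 i0 := by rw [hE]
    rw [Perm.one_apply, Equiv.swap_apply_left] at this
    exact hne01 this
  rw [irrChar]
  rw [← Finset.sum_subset (Finset.subset_univ ({1, Equiv.swap i0 i1} : Finset (Perm (Fin N))))]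
  · rw [Finset.sum_pair hsne]
    have hterm1 : (Equiv.Perm.sign (1 : Perm (Fin N)) : ℤ) *
        youngCount N (fun i => ((twoRow P Q hQP).1 i : ℤ)
          + (((1 : Perm (Fin N)) i : ℕ) : ℤ) - (i : ℤ)) g
        = youngCount N (fun i => if i.val = 0 then (P : ℤ) else if i.val = 1 then (Q : ℤ) else 0) g := by
      rw [Equiv.Perm.sign_one]
      have hfun : (fun i : Fin N => ((twoRow P Q hQP).1 i : ℤ)
          + (((1 : Perm (Fin N)) i : ℕ) : ℤ) - (i : ℤ))
          = (fun i => if i.val = 0 then (P : ℤ) else if i.val = 1 then (Q : ℤ) else 0) := by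
        funext i
        rw [Perm.one_apply, twoRow_apply]
        push_cast
        split_ifs <;> omega
      rw [hfun]
      simp
    have hterm2 : (Equiv.Perm.sign (Equiv.swap i0 i1) : ℤ) *
        youngCount N (fun i => ((twoRow P Q hQP).1 i : ℤ)
          + (((Equiv.swap i0 i1) i : ℕ) : ℤ) - (i : ℤ)) g
        = - youngCount N (fun i => if i.val = 0 then (P : ℤ) + 1
            else if i.val = 1 then (Q : ℤ) - 1 else 0) g := by
      rw [Equiv.Perm.sign_swap hne01]
      have hfun : (fun i : Fin N => ((twoRow P Q hQP).1 i : ℤ)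
          + (((Equiv.swap i0 i1) i : ℕ) : ℤ) - (i : ℤ))
          = (fun i => if i.val = 0 then (P : ℤ) + 1 else if i.val = 1 then (Q : ℤ) - 1 else 0) := by
        funext i
        by_cases h0 : i = i0
        · rw [h0, Equiv.swap_apply_left, twoRow_apply]
          have : (i0 : Fin N).val = 0 := rfl
          rw [this]
          have : (i1 : Fin N).val = 1 := rfl
          rw [this]
          norm_num
        · by_cases h1 : i = i1
          · rw [h1, Equiv.swap_apply_right, twoRow_apply]
            have hv1 : (i1 : Fin N).val = 1 := rfl
            have hv0 : (i0 : Fin N).val = 0 := rfl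
            rw [hv1, hv0]
            norm_num
          · rw [Equiv.swap_apply_of_ne_of_ne h0 h1, twoRow_apply]
            have hv : 2 ≤ i.val := by
              rcases Nat.lt_or_ge i.val 2 with hlt | hge
              · exfalso
                rcases Nat.lt_or_ge i.val 1 with hlt' | hge'
                · exact h0 (Fin.ext (show i.val = (0:ℕ) by omega))
                · exact h1 (Fin.ext (show i.val = (1:ℕ) by omega))
              · exact hge
            rw [if_neg (by omega), if_neg (by omega), if_neg (by omega), if_neg (by omega)]
            push_cast
            ring
      rw [hfun]
      simp
    rw [hterm1, hterm2]
    ring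
  · intro σ _ hσ
    simp only [Finset.mem_insert, Finset.mem_singleton] at hσ
    push_neg at hσ
    have hbad : ∃ i : Fin N, 2 ≤ i.val ∧ (σ i).val < i.val := by
      by_contra hc
      push_neg at hc
      rcases perm_forced_swap σ hn2 (fun i hi => hc i hi) with h | h
      · exact hσ.1 h
      · exact hσ.2 h
    obtain ⟨i, hi2, hlt⟩ := hbad
    rw [youngCount, if_neg, mul_zero]
    push_neg
    refine ⟨i, ?_⟩
    rw [twoRow_apply, if_neg (by omega), if_neg (by omega)]
    push_cast
    omega

/-! ### The scalar product of `irrChar` with the trivial character -/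

lemma core_sum {n : ℕ} (α : Partition') (hα : size α = n) :
    ∑ g : Perm (Fin n), irrChar n α g
      = (n.factorial : ℤ) * (if α = row n then 1 else 0) := by
  have hparts : ∑ i : Fin n, α.1 i.val = n := sum_parts hα
  simp only [irrChar]
  rw [Finset.sum_comm]
  have hY : ∀ σ : Perm (Fin n),
      ∑ g : Perm (Fin n), youngCount n (fun i => (α.1 i : ℤ) + ((σ i : ℕ) : ℤ) - (i : ℤ)) g
        = (n.factorial : ℤ) *
          (if (∀ i : Fin n, 0 ≤ (α.1 i : ℤ) + ((σ i : ℕ) : ℤ) - (i : ℤ)) then 1 else 0) := by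
    intro σ
    by_cases hpos : ∀ i : Fin n, 0 ≤ (α.1 i : ℤ) + ((σ i : ℕ) : ℤ) - (i : ℤ)
    · rw [if_pos hpos, mul_one]
      have hsum_m : ∑ i : Fin n, ((α.1 i : ℤ) + ((σ i : ℕ) : ℤ) - ((i : ℕ) : ℤ)).toNat = n := by
        have hcast : ((∑ i : Fin n, ((α.1 i : ℤ) + ((σ i : ℕ) : ℤ) - ((i : ℕ) : ℤ)).toNat : ℕ) : ℤ)
            = ∑ i : Fin n, ((α.1 i : ℤ) + ((σ i : ℕ) : ℤ) - ((i : ℕ) : ℤ)) := by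
          push_cast
          exact Finset.sum_congr rfl (fun i _ => Int.toNat_of_nonneg (hpos i))
        have hperm : ∑ i : Fin n, (((σ i : ℕ) : ℤ)) = ∑ i : Fin n, ((i : ℕ) : ℤ) :=
          Equiv.sum_comp σ (fun i => ((i : ℕ) : ℤ))
        have hsum : ∑ i : Fin n, ((α.1 i : ℤ) + ((σ i : ℕ) : ℤ) - ((i : ℕ) : ℤ)) = (n : ℤ) := by
          rw [Finset.sum_sub_distrib, Finset.sum_add_distrib, hperm]
          have hα' : ∑ i : Fin n, (α.1 i.val : ℤ) = (n : ℤ) := by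
            rw [← Nat.cast_sum]
            exact_mod_cast congrArg (Nat.cast : ℕ → ℤ) hparts
          rw [hα']
          ring
        have := hcast.trans hsum
        exact_mod_cast this
      calc ∑ g : Perm (Fin n), youngCount n (fun i => (α.1 i : ℤ) + ((σ i : ℕ) : ℤ) - (i : ℤ)) g
          = ∑ g : Perm (Fin n), ((Nat.card {f : Fin n → Fin n // f ∘ g = f
              ∧ ∀ i, Nat.card {x // f x = i}
                = ((α.1 i : ℤ) + ((σ i : ℕ) : ℤ) - ((i : ℕ) : ℤ)).toNat} : ℕ) : ℤ) := by
            apply Finset.sum_congr rfl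
            intro g _
            rw [youngCount, if_pos hpos]
        _ = ((n.factorial : ℕ) : ℤ) := by
            rw [← Nat.cast_sum, burn1 _ hsum_m]
    · rw [if_neg hpos, mul_zero]
      apply Finset.sum_eq_zero
      intro g _
      rw [youngCount, if_neg hpos]
  have hrow : ∀ σ : Perm (Fin n), ∑ g : Perm (Fin n), (Equiv.Perm.sign σ : ℤ) *
      youngCount n (fun i => (α.1 i : ℤ) + ((σ i : ℕ) : ℤ) - (i : ℤ)) g
      = (n.factorial : ℤ) * ((Equiv.Perm.sign σ : ℤ) *
        (if (∀ i : Fin n, 0 ≤ (α.1 i : ℤ) + ((σ i : ℕ) : ℤ) - (i : ℤ)) then 1 else 0)) := by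
    intro σ
    rw [← Finset.mul_sum, hY σ]
    ring
  rw [Finset.sum_congr rfl (fun σ _ => hrow σ), ← Finset.mul_sum]
  congr 1
  -- the signed sum of indicator functions
  by_cases hrowc : α = row n
  · rw [if_pos hrowc]
    subst hrowc
    rw [Finset.sum_eq_single 1]
    · rw [Equiv.Perm.sign_one, if_pos]
      · norm_num
      · intro i
        simp only [Perm.one_apply]
        omega
    · intro σ _ hσ
      rw [if_neg, mul_zero]
      intro hcond
      apply hσ
      apply perm_forced_id
      intro i hi
      have hc := hcond i
      have hz : (row n).1 i.val = 0 := by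
        rw [row_apply]
        simp
        omega
      rw [hz] at hc
      push_cast at hc
      omega
    · intro h
      simp at h
  · rw [if_neg hrowc]
    have hn1 : 1 ≤ n := by
      rcases Nat.eq_zero_or_pos n with h0 | h
      · exfalso
        apply hrowc
        rw [h0, row_zero]
        exact size_eq_zero (by omega)
      · exact h
    have hα1 : 1 ≤ α.1 1 := by
      by_contra hc
      have h0 : α.1 1 = 0 := by omega
      have hre := row_eq_of α h0
      apply hrowc
      have hsz := congrArg size hre
      rw [hα, size_row] at hsz
      rw [hre, hsz]
    have hn2 : 2 ≤ n := by
      have h10 : 1 ≤ α.1 0 := le_trans hα1 (α.2 (Nat.zero_le 1))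
      have hsub : ({0, 1} : Finset ℕ) ⊆ α.1.support := by
        intro j hj
        simp only [Finset.mem_insert, Finset.mem_singleton] at hj
        rcases hj with rfl | rfl <;> exact Finsupp.mem_support_iff.mpr (by omega)
      have hsum2 : α.1 0 + α.1 1 ≤ size α := by
        calc α.1 0 + α.1 1 = ∑ j ∈ ({0,1} : Finset ℕ), α.1 j := by
              rw [Finset.sum_pair (by omega : (0:ℕ) ≠ 1)]
        _ ≤ ∑ j ∈ α.1.support, α.1 j := Finset.sum_le_sum_of_subset_of_nonneg hsub (by simp)
        _ = size α := rfl
      omega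
    set s : Perm (Fin n) := Equiv.swap (⟨0, by omega⟩ : Fin n) ⟨1, by omega⟩ with hs
    have hne01 : (⟨0, by omega⟩ : Fin n) ≠ (⟨1, by omega⟩ : Fin n) := by
      intro hE; rw [Fin.ext_iff] at hE; simp at hE
    have hcond_iff : ∀ σ : Perm (Fin n),
        (∀ i : Fin n, 0 ≤ (α.1 i : ℤ) + ((σ i : ℕ) : ℤ) - (i : ℤ))
        ↔ (∀ i : Fin n, 2 ≤ i.val → 0 ≤ (α.1 i : ℤ) + ((σ i : ℕ) : ℤ) - (i : ℤ)) := by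
      intro σ
      constructor
      · exact fun h i _ => h i
      · intro h i
        rcases Nat.lt_or_ge i.val 2 with hi | hi
        · rcases Nat.lt_or_ge i.val 1 with hi' | hi'
          · have hiv : (i : ℕ) = 0 := by omega
            rw [hiv]
            omega
          · have hiv : (i : ℕ) = 1 := by omega
            have h1 : 1 ≤ α.1 i.val := by rw [hiv]; exact hα1
            rw [hiv]
            omega
        · exact h i hi
    have happ : ∀ (σ : Perm (Fin n)) (i : Fin n), 2 ≤ i.val → (σ * s) i = σ i := by
      intro σ i hi
      rw [Perm.mul_apply, hs, Equiv.swap_apply_of_ne_of_ne]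
      · intro hE
        rw [hE] at hi
        exact (by omega : ¬ ((2:ℕ) ≤ 0)) hi
      · intro hE
        rw [hE] at hi
        exact (by omega : ¬ ((2:ℕ) ≤ 1)) hi
    have hflip : ∀ σ : Perm (Fin n), (Equiv.Perm.sign (σ * s) : ℤ) *
        (if (∀ i : Fin n, 0 ≤ (α.1 i : ℤ) + (((σ * s) i : ℕ) : ℤ) - (i : ℤ)) then 1 else 0)
        = - ((Equiv.Perm.sign σ : ℤ) *
        (if (∀ i : Fin n, 0 ≤ (α.1 i : ℤ) + ((σ i : ℕ) : ℤ) - (i : ℤ)) then 1 else 0)) := by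
      intro σ
      have hsign : (Equiv.Perm.sign (σ * s) : ℤ) = - (Equiv.Perm.sign σ : ℤ) := by
        rw [map_mul, hs, Equiv.Perm.sign_swap hne01]
        simp
      have hiff : (∀ i : Fin n, 0 ≤ (α.1 i : ℤ) + (((σ * s) i : ℕ) : ℤ) - (i : ℤ))
          ↔ (∀ i : Fin n, 0 ≤ (α.1 i : ℤ) + ((σ i : ℕ) : ℤ) - (i : ℤ)) := by
        rw [hcond_iff (σ * s), hcond_iff σ]
        constructor <;> intro h i hi
        · have := h i hi
          rwa [happ σ i hi] at this
        · rw [happ σ i hi]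
          exact h i hi
      rw [hsign]
      by_cases hcnd : ∀ i : Fin n, 0 ≤ (α.1 i : ℤ) + ((σ i : ℕ) : ℤ) - (i : ℤ)
      · rw [if_pos hcnd, if_pos (hiff.mpr hcnd)]
        ring
      · rw [if_neg hcnd, if_neg (fun hx => hcnd (hiff.mp hx))]
        ring
    have hre : ∑ σ : Perm (Fin n), (Equiv.Perm.sign σ : ℤ) *
        (if (∀ i : Fin n, 0 ≤ (α.1 i : ℤ) + ((σ i : ℕ) : ℤ) - (i : ℤ)) then 1 else 0)
        = ∑ σ : Perm (Fin n), (Equiv.Perm.sign (σ * s) : ℤ) *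
        (if (∀ i : Fin n, 0 ≤ (α.1 i : ℤ) + (((σ * s) i : ℕ) : ℤ) - (i : ℤ)) then 1 else 0) :=
      (Fintype.sum_equiv (Equiv.mulRight s) _ _ (fun σ => rfl)).symm
    have hneg : ∑ σ : Perm (Fin n), (Equiv.Perm.sign σ : ℤ) *
        (if (∀ i : Fin n, 0 ≤ (α.1 i : ℤ) + ((σ i : ℕ) : ℤ) - (i : ℤ)) then 1 else 0)
        = - ∑ σ : Perm (Fin n), (Equiv.Perm.sign σ : ℤ) *
        (if (∀ i : Fin n, 0 ≤ (α.1 i : ℤ) + ((σ i : ℕ) : ℤ) - (i : ℤ)) then 1 else 0) := by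
      nth_rewrite 1 [hre]
      rw [← Finset.sum_neg_distrib]
      exact Finset.sum_congr rfl (fun σ _ => hflip σ)
    linarith

/-! ### Evaluations of lr and kron -/

lemma lr_right_P0 (α : Partition') (n : ℕ) :
    lr α P0 (row n) = if α = row n then 1 else 0 := by
  rw [lr]
  by_cases hg : size (row n) = size α + size P0
  · rw [if_pos hg]
    have hn : n = size α + size P0 := by rw [size_row] at hg; exact hg
    have hsz : size α = n := by rw [size_P0] at hn; omega
    have hsummand : ∀ (g : Perm (Fin (size α))) (h : Perm (Fin (size P0))),
        irrChar (size α) α g * irrChar (size P0) P0 h *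
          irrChar (size α + size P0) (row n) (sumEmb g h) = irrChar (size α) α g := by
      intro g h
      rw [irrChar_of_dim_zero size_P0 P0 h, irrChar_row n hn (sumEmb g h), mul_one, mul_one]
    have hcard : (Finset.univ : Finset (Perm (Fin (size P0)))).card = 1 := by
      rw [Finset.card_univ, Fintype.card_perm, Fintype.card_fin, size_P0]
      rfl
    have hnum : (∑ g : Perm (Fin (size α)), ∑ h : Perm (Fin (size P0)),
        irrChar (size α) α g * irrChar (size P0) P0 h *
          irrChar (size α + size P0) (row n) (sumEmb g h))
        = ((size α).factorial : ℤ) * (if α = row (size α) then 1 else 0) := by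
      calc _ = ∑ g : Perm (Fin (size α)), irrChar (size α) α g := by
            apply Finset.sum_congr rfl
            intro g _
            rw [Finset.sum_congr rfl (fun h _ => hsummand g h), Finset.sum_const, hcard, one_smul]
        _ = _ := core_sum α rfl
    rw [hnum]
    have hden : (((size α).factorial : ℤ) * ((size P0).factorial : ℤ)) = ((size α).factorial : ℤ) := by
      rw [size_P0]
      simp
    rw [hden, Int.mul_ediv_cancel_left _
      (Int.natCast_ne_zero.mpr (Nat.factorial_ne_zero _)), hsz]
    split_ifs <;> rfl
  · rw [if_neg hg]
    by_cases hc : α = row n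
    · exfalso
      apply hg
      rw [hc, size_row, size_P0]
      omega
    · rw [if_neg hc]

lemma lr_left_rowP0 (n : ℕ) (τ : Partition') :
    lr (row n) P0 τ = if τ = row n then 1 else 0 := by
  rw [lr]
  by_cases hg : size τ = size (row n) + size P0
  · rw [if_pos hg]
    have hsummand : ∀ (g : Perm (Fin (size (row n)))) (h : Perm (Fin (size P0))),
        irrChar (size (row n)) (row n) g * irrChar (size P0) P0 h *
          irrChar (size (row n) + size P0) τ (sumEmb g h)
          = irrChar (size (row n) + size P0) τ g := by
      intro g h
      have hEmb : sumEmb g h = g := sumEmb_zero g h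
      rw [irrChar_row n (size_row n).symm g, irrChar_of_dim_zero size_P0 P0 h, one_mul, one_mul,
        hEmb]
    have hcard : (Finset.univ : Finset (Perm (Fin (size P0)))).card = 1 := by
      rw [Finset.card_univ, Fintype.card_perm, Fintype.card_fin, size_P0]
      rfl
    have hnum : (∑ g : Perm (Fin (size (row n))), ∑ h : Perm (Fin (size P0)),
        irrChar (size (row n)) (row n) g * irrChar (size P0) P0 h *
          irrChar (size (row n) + size P0) τ (sumEmb g h))
        = (((size (row n))).factorial : ℤ)
          * (if τ = row ((size (row n))) then 1 else 0) := by
      calc _ = ∑ g : Perm (Fin (size (row n))), irrChar (size (row n) + size P0) τ g := by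
            apply Finset.sum_congr rfl
            intro g _
            rw [Finset.sum_congr rfl (fun h _ => hsummand g h), Finset.sum_const, hcard, one_smul]
        _ = _ := core_sum (n := size (row n)) τ (by have := size_P0; omega)
    rw [hnum, size_row, size_P0]
    simp only [Nat.factorial_zero, Nat.cast_one, mul_one]
    rw [Int.mul_ediv_cancel_left _
      (Int.natCast_ne_zero.mpr (Nat.factorial_ne_zero _))]
    split_ifs <;> rfl
  · rw [if_neg hg]
    by_cases hc : τ = row n
    · exfalso
      apply hg
      rw [hc, size_row, size_P0]
      omega
    · rw [if_neg hc]

lemma lr_P0_row (ρ : Partition') (n : ℕ) :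
    lr P0 ρ (row n) = if ρ = row n then 1 else 0 := by
  rw [lr]
  by_cases hg : size (row n) = size P0 + size ρ
  · rw [if_pos hg]
    have hn : n = size P0 + size ρ := by rw [size_row] at hg; exact hg
    have hsz : size ρ = n := by rw [size_P0] at hn; omega
    have hsummand : ∀ (g : Perm (Fin (size P0))) (h : Perm (Fin (size ρ))),
        irrChar (size P0) P0 g * irrChar (size ρ) ρ h *
          irrChar (size P0 + size ρ) (row n) (sumEmb g h) = irrChar (size ρ) ρ h := by
      intro g h
      rw [irrChar_of_dim_zero size_P0 P0 g, irrChar_row n hn (sumEmb g h), one_mul, mul_one]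
    have hcard : (Finset.univ : Finset (Perm (Fin (size P0)))).card = 1 := by
      rw [Finset.card_univ, Fintype.card_perm, Fintype.card_fin, size_P0]
      rfl
    have hnum : (∑ g : Perm (Fin (size P0)), ∑ h : Perm (Fin (size ρ)),
        irrChar (size P0) P0 g * irrChar (size ρ) ρ h *
          irrChar (size P0 + size ρ) (row n) (sumEmb g h))
        = ((size ρ).factorial : ℤ) * (if ρ = row (size ρ) then 1 else 0) := by
      calc _ = ∑ _g : Perm (Fin (size P0)), ∑ h : Perm (Fin (size ρ)), irrChar (size ρ) ρ h := by
            apply Finset.sum_congr rfl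
            intro g _
            exact Finset.sum_congr rfl (fun h _ => hsummand g h)
        _ = ∑ h : Perm (Fin (size ρ)), irrChar (size ρ) ρ h := by
            rw [Finset.sum_const, hcard, one_smul]
        _ = _ := core_sum ρ rfl
    rw [hnum]
    have hden : (((size P0).factorial : ℤ) * ((size ρ).factorial : ℤ))
        = ((size ρ).factorial : ℤ) := by
      rw [size_P0]
      simp
    rw [hden, Int.mul_ediv_cancel_left _
      (Int.natCast_ne_zero.mpr (Nat.factorial_ne_zero _)), hsz]
    split_ifs <;> rfl
  · rw [if_neg hg]
    by_cases hc : ρ = row n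
    · exfalso
      apply hg
      rw [hc, size_row, size_P0]
      omega
    · rw [if_neg hc]

lemma kron_P0 : kron P0 P0 P0 = 1 := by
  rw [kron, if_pos ⟨rfl, rfl⟩]
  have hsummand : ∀ g : Perm (Fin (size P0)),
      irrChar (size P0) P0 g * irrChar (size P0) P0 g * irrChar (size P0) P0 g = 1 := by
    intro g
    rw [irrChar_of_dim_zero size_P0 P0 g]
    ring
  have hcard : (Finset.univ : Finset (Perm (Fin (size P0)))).card = 1 := by
    rw [Finset.card_univ, Fintype.card_perm, Fintype.card_fin, size_P0]
    rfl
  rw [Finset.sum_congr rfl (fun g _ => hsummand g), Finset.sum_const, hcard, one_smul]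
  rw [size_P0]
  rfl

lemma lr_final (d : ℕ) (hd : 0 < d) (hle : d ≤ 2*d) :
    lr (row (2*d)) (row d) (twoRow (2*d) d hle) = 1 := by
  rw [lr]
  have hA : size (row (2*d)) = 2*d := size_row _
  have hC : size (row d) = d := size_row _
  have hN : size (twoRow (2*d) d hle) = 2*d + d := size_twoRow _ _ _
  rw [if_pos (by omega)]
  have hJT : ∀ g' : Perm (Fin (size (row (2*d)) + size (row d))),
      irrChar (size (row (2*d)) + size (row d)) (twoRow (2*d) d hle) g'
        = youngCount _ (fun i => if i.val = 0 then ((2*d : ℕ) : ℤ)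
            else if i.val = 1 then ((d : ℕ) : ℤ) else 0) g'
          - youngCount _ (fun i => if i.val = 0 then ((2*d : ℕ) : ℤ) + 1
            else if i.val = 1 then ((d : ℕ) : ℤ) - 1 else 0) g' :=
    fun g' => irrChar_twoRow (2*d) d hle hd (by omega) g'
  have hsummand : ∀ (g : Perm (Fin (size (row (2*d))))) (h : Perm (Fin (size (row d)))),
      irrChar (size (row (2*d))) (row (2*d)) g * irrChar (size (row d)) (row d) h *
        irrChar (size (row (2*d)) + size (row d)) (twoRow (2*d) d hle) (sumEmb g h)
      = youngCount _ (fun i => if i.val = 0 then ((2*d : ℕ) : ℤ)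
            else if i.val = 1 then ((d : ℕ) : ℤ) else 0) (sumEmb g h)
          - youngCount _ (fun i => if i.val = 0 then ((2*d : ℕ) : ℤ) + 1
            else if i.val = 1 then ((d : ℕ) : ℤ) - 1 else 0) (sumEmb g h) := by
    intro g h
    rw [irrChar_row (2*d) hA.symm g, irrChar_row d hC.symm h, one_mul, one_mul, hJT]
  have hsum1 := burn2Y (size (row (2*d))) (size (row d)) d (by omega) (by omega) (by omega)
    (by omega)
    (fun i => if i.val = 0 then ((2*d : ℕ) : ℤ) else if i.val = 1 then ((d : ℕ) : ℤ) else 0)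
    (by
      intro i
      split_ifs
      · rw [hA, hC]
        omega
      · rfl
      · rfl)
  have hsum2 := burn2Y (size (row (2*d))) (size (row d)) (d-1) (by omega) (by omega) (by omega)
    (by omega)
    (fun i => if i.val = 0 then ((2*d : ℕ) : ℤ) + 1 else if i.val = 1 then ((d : ℕ) : ℤ) - 1 else 0)
    (by
      intro i
      split_ifs
      · rw [hA, hC]
        omega
      · omega
      · rfl)
  have hnum : (∑ g : Perm (Fin (size (row (2*d)))), ∑ h : Perm (Fin (size (row d))),
      irrChar (size (row (2*d))) (row (2*d)) g * irrChar (size (row d)) (row d) h *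
        irrChar (size (row (2*d)) + size (row d)) (twoRow (2*d) d hle) (sumEmb g h))
      = ((size (row (2*d))).factorial : ℤ) * ((size (row d)).factorial : ℤ) := by
    rw [Finset.sum_congr rfl (fun g _ => Finset.sum_congr rfl (fun h _ => hsummand g h))]
    simp only [Finset.sum_sub_distrib]
    rw [hsum1, hsum2]
    have hdd : d - 1 + 1 = d := by omega
    rw [hdd]
    push_cast
    ring
  rw [hnum, Int.ediv_self (mul_ne_zero (Int.natCast_ne_zero.mpr (Nat.factorial_ne_zero _))
    (Int.natCast_ne_zero.mpr (Nat.factorial_ne_zero _))), Int.toNat_one]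

/-! ### Vanishing constraints -/

lemma lr_ne_zero_size {l m nu : Partition'} (h : lr l m nu ≠ 0) :
    size nu = size l + size m := by
  by_contra hc
  rw [lr, if_neg hc] at h
  exact h rfl

lemma kron_ne_zero_size {l m nu : Partition'} (h : kron l m nu ≠ 0) :
    size l = size nu ∧ size m = size nu := by
  by_contra hc
  rw [kron, if_neg hc] at h
  exact h rfl

lemma force (d : ℕ) (hd : 0 < d) (hle : d ≤ 2*d) (α β δ η ρ τ : Partition')
    (h : lr α β (row (2*d)) * lr η ρ (row d) * kron β η δ * lr α δ τ *
      lr τ ρ (twoRow (2*d) d hle) ≠ 0) :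
    α = row (2*d) ∧ β = P0 ∧ δ = P0 ∧ η = P0 ∧ ρ = row d ∧ τ = row (2*d) := by
  have h1 : lr α β (row (2*d)) ≠ 0 := fun hz => h (by rw [hz, zero_mul, zero_mul, zero_mul, zero_mul])
  have h2 : lr η ρ (row d) ≠ 0 := fun hz => h (by rw [hz]; ring)
  have h3 : kron β η δ ≠ 0 := fun hz => h (by rw [hz]; ring)
  have h4 : lr α δ τ ≠ 0 := fun hz => h (by rw [hz]; ring)
  have h5 : lr τ ρ (twoRow (2*d) d hle) ≠ 0 := fun hz => h (by rw [hz]; ring)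
  have s1 := lr_ne_zero_size h1
  rw [size_row] at s1
  have s2 := lr_ne_zero_size h2
  rw [size_row] at s2
  obtain ⟨s3a, s3b⟩ := kron_ne_zero_size h3
  have s4 := lr_ne_zero_size h4
  have s5 := lr_ne_zero_size h5
  rw [size_twoRow] at s5
  have hβ0 : size β = 0 := by omega
  have hδ0 : size δ = 0 := by omega
  have hη0 : size η = 0 := by omega
  have hβ : β = P0 := size_eq_zero hβ0
  have hδ : δ = P0 := size_eq_zero hδ0
  have hη : η = P0 := size_eq_zero hη0
  have hα : α = row (2*d) := by
    by_contra hc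
    rw [hβ, lr_right_P0, if_neg hc] at h1
    exact h1 rfl
  have hρ : ρ = row d := by
    by_contra hc
    rw [hη, lr_P0_row, if_neg hc] at h2
    exact h2 rfl
  have hτ : τ = row (2*d) := by
    by_contra hc
    rw [hα, hδ, lr_left_rowP0, if_neg hc] at h4
    exact h4 rfl
  exact ⟨hα, hβ, hδ, hη, hρ, hτ⟩

open Partition' in
/-- For every positive integer `d`, the Aguiar coefficient `a_{(2d),(d)}^{(2d,d)}` equals 1. -/
theorem aguiar_two_one_twoOne_stable (d : ℕ) (hd : 0 < d) :
    aguiar (row (2 * d)) (row d) (twoRow (2 * d) d (by omega)) = 1 := by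
  have hle : d ≤ 2*d := by omega
  have hzero : ∀ α β δ η ρ τ : Partition',
      ¬(α = row (2*d) ∧ β = P0 ∧ δ = P0 ∧ η = P0 ∧ ρ = row d ∧ τ = row (2*d)) →
      lr α β (row (2*d)) * lr η ρ (row d) * kron β η δ * lr α δ τ *
        lr τ ρ (twoRow (2*d) d hle) = 0 := by
    intro α β δ η ρ τ hne
    by_contra hc
    exact hne (force d hd hle α β δ η ρ τ hc)
  rw [aguiar]
  rw [finsum_eq_single _ (row (2*d)) (fun α hα => by
    refine finsum_eq_zero_of_forall_eq_zero (fun β => ?_)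
    refine finsum_eq_zero_of_forall_eq_zero (fun δ => ?_)
    refine finsum_eq_zero_of_forall_eq_zero (fun η => ?_)
    refine finsum_eq_zero_of_forall_eq_zero (fun ρ => ?_)
    refine finsum_eq_zero_of_forall_eq_zero (fun τ => ?_)
    exact hzero α β δ η ρ τ (fun hc => hα hc.1))]
  rw [finsum_eq_single _ P0 (fun β hβ => by
    refine finsum_eq_zero_of_forall_eq_zero (fun δ => ?_)
    refine finsum_eq_zero_of_forall_eq_zero (fun η => ?_)
    refine finsum_eq_zero_of_forall_eq_zero (fun ρ => ?_)
    refine finsum_eq_zero_of_forall_eq_zero (fun τ => ?_)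
    exact hzero _ β δ η ρ τ (fun hc => hβ hc.2.1))]
  rw [finsum_eq_single _ P0 (fun δ hδ => by
    refine finsum_eq_zero_of_forall_eq_zero (fun η => ?_)
    refine finsum_eq_zero_of_forall_eq_zero (fun ρ => ?_)
    refine finsum_eq_zero_of_forall_eq_zero (fun τ => ?_)
    exact hzero _ _ δ η ρ τ (fun hc => hδ hc.2.2.1))]
  rw [finsum_eq_single _ P0 (fun η hη => by
    refine finsum_eq_zero_of_forall_eq_zero (fun ρ => ?_)
    refine finsum_eq_zero_of_forall_eq_zero (fun τ => ?_)
    exact hzero _ _ _ η ρ τ (fun hc => hη hc.2.2.2.1))]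
  rw [finsum_eq_single _ (row d) (fun ρ hρ => by
    refine finsum_eq_zero_of_forall_eq_zero (fun τ => ?_)
    exact hzero _ _ _ _ ρ τ (fun hc => hρ hc.2.2.2.2.1))]
  rw [finsum_eq_single _ (row (2*d)) (fun τ hτ =>
    hzero _ _ _ _ _ τ (fun hc => hτ hc.2.2.2.2.2))]
  rw [lr_right_P0, lr_P0_row, kron_P0]
  simp only [if_true, one_mul, mul_one]
  exact lr_final d hd hle
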